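/- arXiv:1902.01539 — 6 statements merged into one kernel-verified Lean document; each statement's English description precedes it below -/
import Mathlib

section
/- Let f : ℝ → ℝ be continuous on [0, ∞) and suppose f(x) tends to a finite limit L as x → ∞. Then for all real α > 0 and β > 0, the improper integral ∫₀^∞ (f(αx) − f(βx))/x dx converges (as the limit of ∫_ε^T as ε → 0⁺ and T → ∞) and equals (L − f(0)) · log(α/β). -/
/-! Substituting `u = αx` and `u = βx` turns `∫_ε^T (f(αx) - f(βx))/x dx` into
`Φ(T) - Φ(ε)`, where `Φ(s) = ∫_{βs}^{αs} f(u)/u du = ∫_β^α f(st)/t dt`. As `s → ∞` or `s → 0⁺`,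
`f(st)` converges uniformly in `t ∈ [β, α]` to `L`, resp. `f 0`, so `Φ(s)` tends to
`L log(α/β)`, resp. `f 0 · log(α/β)`. -/

open Filter MeasureTheory Topology Set
open scoped Interval

lemma continuousOn_div_self_uIcc {f : ℝ → ℝ} (hf : ContinuousOn f (Ioi 0)) {a b : ℝ}
    (ha : 0 < a) (hb : 0 < b) : ContinuousOn (fun x => f x / x) [[a, b]] := by
  have hpos : [[a, b]] ⊆ Ioi 0 := fun x hx => lt_of_lt_of_le (lt_min ha hb) hx.1
  exact (hf.mono hpos).div continuousOn_id fun x hx => (hpos hx).ne'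

lemma intervalIntegral_comp_mul_div_self (f : ℝ → ℝ) {c : ℝ} (hc : c ≠ 0) (a b : ℝ) :
    ∫ x in a..b, f (c * x) / x = ∫ u in c * a..c * b, f u / u := by
  have hx : ∀ x : ℝ, f (c * x) / x = c * (f (c * x) / (c * x)) := by
    intro x
    rcases eq_or_ne x 0 with rfl | hx
    · simp
    · field_simp
  simp only [hx, intervalIntegral.integral_const_mul]
  exact intervalIntegral.smul_integral_comp_mul_left (fun u => f u / u) c

lemma intervalIntegral_sub_comp_mul_div_self {f : ℝ → ℝ} (hf : ContinuousOn f (Ioi 0))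
    {α β ε T : ℝ} (hα : 0 < α) (hβ : 0 < β) (hε : 0 < ε) (hT : 0 < T) :
    ∫ x in ε..T, (f (α * x) - f (β * x)) / x
      = (∫ t in β..α, f (T * t) / t) - ∫ t in β..α, f (ε * t) / t := by
  have hint : ∀ {a b : ℝ}, 0 < a → 0 < b → IntervalIntegrable (fun u => f u / u) volume a b :=
    fun ha hb => (continuousOn_div_self_uIcc hf ha hb).intervalIntegrable
  have hcomp : ∀ {c : ℝ}, 0 < c → IntervalIntegrable (fun x => f (c * x) / x) volume ε T := by
    intro c hc
    refine (continuousOn_div_self_uIcc ?_ hε hT).intervalIntegrable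
    exact hf.comp (continuousOn_const.mul continuousOn_id) fun x hx => mul_pos hc hx
  simp only [sub_div]
  rw [intervalIntegral.integral_sub (hcomp hα) (hcomp hβ)]
  simp only [intervalIntegral_comp_mul_div_self f hα.ne',
    intervalIntegral_comp_mul_div_self f hβ.ne',
    intervalIntegral_comp_mul_div_self f hT.ne', intervalIntegral_comp_mul_div_self f hε.ne']
  rw [intervalIntegral.integral_interval_sub_interval_comm' (hint (mul_pos hα hε) (mul_pos hα hT))
    (hint (mul_pos hβ hε) (mul_pos hβ hT)) (hint (mul_pos hα hε) (mul_pos hβ hε))]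
  simp only [mul_comm]

lemma tendsto_intervalIntegral_comp_mul_div_self {l l' : Filter ℝ} [l.IsCountablyGenerated]
    {f : ℝ → ℝ} {c : ℝ} (hf : ContinuousOn f (Ioi 0)) (hfc : Tendsto f l' (𝓝 c))
    {a b : ℝ} (ha : 0 < a) (hb : 0 < b) (hl : ∀ᶠ s in l, 0 < s)
    (hll' : Tendsto (fun q : ℝ × ℝ => q.1 * q.2) (l ×ˢ 𝓟 [[a, b]]) l') :
    Tendsto (fun s => ∫ t in a..b, f (s * t) / t) l (𝓝 (c * Real.log (b / a))) := by
  have hm : 0 < min a b := lt_min ha hb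
  have hlim : ∫ t in a..b, c / t = c * Real.log (b / a) := by
    simp only [div_eq_mul_inv c, intervalIntegral.integral_const_mul, integral_inv_of_pos ha hb]
  rw [← hlim]
  refine TendstoUniformlyOn.tendsto_intervalIntegral_of_continuousOn ?_ ?_
  · filter_upwards [hl] with s hs
    exact continuousOn_div_self_uIcc
      (hf.comp (continuousOn_const.mul continuousOn_id) fun x hx => mul_pos hs hx) ha hb
  · rw [Metric.tendstoUniformlyOn_iff]
    intro ε hε
    have hclose := (hfc.comp hll').eventually (Metric.ball_mem_nhds c (mul_pos hε hm))
    filter_upwards [eventually_prod_principal_iff.mp hclose] with s hs t ht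
    have htpos : 0 < t := hm.trans_le ht.1
    calc dist (c / t) (f (s * t) / t) = dist c (f (s * t)) / t := by
          rw [Real.dist_eq, Real.dist_eq, ← sub_div, abs_div, abs_of_pos htpos]
      _ < ε := by
          rw [div_lt_iff₀ htpos, dist_comm]
          exact (hs t ht).trans_le (by gcongr; exact ht.1)

lemma tendsto_mul_atTop_prod_principal {K : Set ℝ} {m : ℝ} (hm : 0 < m) (hK : ∀ t ∈ K, m ≤ t) :
    Tendsto (fun q : ℝ × ℝ => q.1 * q.2) (atTop ×ˢ 𝓟 K) atTop := by
  refine tendsto_atTop_mono' _ ?_ ((tendsto_fst (g := 𝓟 K)).atTop_mul_const hm)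
  filter_upwards [prod_mem_prod (Ici_mem_atTop 0) (mem_principal_self K)] with q hq
  exact mul_le_mul_of_nonneg_left (hK _ hq.2) hq.1

lemma tendsto_mul_nhdsGT_prod_principal {K : Set ℝ} (hK : Bornology.IsBounded K)
    (hK0 : K ⊆ Ici 0) :
    Tendsto (fun q : ℝ × ℝ => q.1 * q.2) (𝓝[>] 0 ×ˢ 𝓟 K) (𝓝[≥] 0) := by
  obtain ⟨C, hC⟩ := hK.exists_norm_le
  refine tendsto_nhdsWithin_iff.mpr ⟨?_, ?_⟩
  · refine Tendsto.zero_mul_isBoundedUnder_le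
      ((tendsto_fst (g := 𝓟 K)).mono_right nhdsWithin_le_nhds) ?_
    exact isBoundedUnder_of_eventually_le (a := C)
      (eventually_prod_principal_iff.mpr (Eventually.of_forall fun _ t ht => hC t ht))
  · filter_upwards [prod_mem_prod self_mem_nhdsWithin (mem_principal_self K)] with q hq
    exact mul_nonneg (le_of_lt hq.1) (mem_Ici.mp (hK0 hq.2))

/-- Cauchy–Frullani integral: if `f` is continuous on `[0, ∞)` and tends to `L` at `∞`,
then `∫₀^∞ (f (α x) - f (β x)) / x dx` (as an improper integral, the limit of the
integrals over `[ε, T]` as `ε → 0⁺` and `T → ∞`) converges to `(L - f 0) * log (α / β)`. -/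
theorem frullani_integral (f : ℝ → ℝ) (L : ℝ)
    (hf : ContinuousOn f (Set.Ici 0))
    (hlim : Tendsto f atTop (𝓝 L))
    (α β : ℝ) (hα : 0 < α) (hβ : 0 < β) :
    Tendsto (fun p : ℝ × ℝ => ∫ x in p.1..p.2, (f (α * x) - f (β * x)) / x)
      ((𝓝[>] (0 : ℝ)) ×ˢ atTop)
      (𝓝 ((L - f 0) * Real.log (α / β))) := by
  have hf' : ContinuousOn f (Ioi 0) := hf.mono Ioi_subset_Ici_self
  have atZero : Tendsto (fun ε => ∫ t in β..α, f (ε * t) / t) (𝓝[>] 0)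
      (𝓝 (f 0 * Real.log (α / β))) :=
    tendsto_intervalIntegral_comp_mul_div_self hf' (hf 0 self_mem_Ici) hβ hα self_mem_nhdsWithin
      (tendsto_mul_nhdsGT_prod_principal isCompact_uIcc.isBounded
        fun t ht => (le_min hβ.le hα.le).trans ht.1)
  have atInf : Tendsto (fun T => ∫ t in β..α, f (T * t) / t) atTop
      (𝓝 (L * Real.log (α / β))) :=
    tendsto_intervalIntegral_comp_mul_div_self hf' hlim hβ hα (eventually_gt_atTop 0)
      (tendsto_mul_atTop_prod_principal (lt_min hβ hα) fun t ht => ht.1)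
  rw [sub_mul]
  refine ((atInf.comp tendsto_snd).sub (atZero.comp tendsto_fst)).congr' ?_
  filter_upwards [prod_mem_prod self_mem_nhdsWithin (Ioi_mem_atTop 0)] with ⟨ε, T⟩ ⟨hε, hT⟩
  exact (intervalIntegral_sub_comp_mul_div_self hf' hα hβ hε hT).symm
end

section
/- Let n ≥ 1 be an integer and let f : ℝ → ℝ be n-times continuously differentiable on [0, ∞) with f(x) → L as x → ∞. Assume that for each integer k with 1 ≤ k ≤ n − 1, the function x^k · f^{(k)}(x) tends to 0 both as x → 0⁺ and as x → ∞, and that x ↦ x^{n−1} f^{(n)}(x) is integrable on (0, ∞). Then ∫₀^∞ x^{n−1} f^{(n)}(x) dx = (−1)^{n−1} (L − f(0)) · (n−1)!. -/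
/-!
Integrating `x ^ (n - 1) f⁽ⁿ⁾(x)` by parts `n - 1` times gives the explicit primitive
`∑ₘ (-1) ^ (n - 1 - m) (n - 1)! / m! · x ^ m f⁽ᵐ⁾(x)`. At `x = 0` only the term `m = 0` survives,
and at infinity the hypotheses `x ^ k f⁽ᵏ⁾(x) → 0` kill every term except `m = 0` again, so the
improper integral is `(-1) ^ (n - 1) (n - 1)! (L - f 0)`.
-/

open Filter MeasureTheory Topology

/-- Unrolled, `x ^ N g_N - N x ^ (N - 1) g_(N-1) + ⋯ + (-1) ^ N N! g_0`. -/
def powMulPrimitive {R : Type*} [Ring R] (g : ℕ → R → R) : ℕ → R → R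
  | 0 => g 0
  | N + 1 => fun y => y ^ (N + 1) * g (N + 1) y - (N + 1) * powMulPrimitive g N y

theorem powMulPrimitive_zero_right {R : Type*} [CommRing R] (g : ℕ → R → R) (N : ℕ) :
    powMulPrimitive g N 0 = (-1) ^ N * N.factorial * g 0 0 := by
  induction N with
  | zero => simp [powMulPrimitive]
  | succ N ih =>
    simp only [powMulPrimitive, ih, Nat.factorial_succ]
    push_cast
    ring

section NormedField

variable {𝕜 : Type*} [NontriviallyNormedField 𝕜] (g : ℕ → 𝕜 → 𝕜)

theorem hasDerivAt_powMulPrimitive {x : 𝕜} :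
    ∀ N : ℕ, (∀ m ≤ N, HasDerivAt (g m) (g (m + 1) x) x) →
      HasDerivAt (powMulPrimitive g N) (x ^ N * g (N + 1) x) x
  | 0, h => by simpa [powMulPrimitive] using h 0 le_rfl
  | N + 1, h => by
    have ih := hasDerivAt_powMulPrimitive N fun m hm => h m (hm.trans N.le_succ)
    have hpow := (hasDerivAt_pow (N + 1) x).fun_mul (h (N + 1) le_rfl)
    exact (hpow.fun_sub (ih.const_mul ((N : 𝕜) + 1))).congr_deriv (by push_cast; ring)

theorem continuousWithinAt_powMulPrimitive {s : Set 𝕜} {x : 𝕜} :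
    ∀ N : ℕ, (∀ m ≤ N, ContinuousWithinAt (g m) s x) →
      ContinuousWithinAt (powMulPrimitive g N) s x
  | 0, h => h 0 le_rfl
  | N + 1, h =>
    (((continuous_pow (N + 1)).continuousWithinAt).mul (h (N + 1) le_rfl)).sub
      (continuousWithinAt_const.mul
        (continuousWithinAt_powMulPrimitive N fun m hm => h m (hm.trans N.le_succ)))

theorem tendsto_powMulPrimitive {l : Filter 𝕜} {L : 𝕜} (hg : Tendsto (g 0) l (𝓝 L)) :
    ∀ N : ℕ, (∀ m, 1 ≤ m → m ≤ N → Tendsto (fun y => y ^ m * g m y) l (𝓝 0)) →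
      Tendsto (powMulPrimitive g N) l (𝓝 ((-1) ^ N * N.factorial * L))
  | 0, _ => by simpa [powMulPrimitive] using hg
  | N + 1, h => by
    have ih := tendsto_powMulPrimitive hg N fun m hm hmN => h m hm (hmN.trans N.le_succ)
    have hlim := (h (N + 1) N.succ_pos le_rfl).sub (ih.const_mul ((N : 𝕜) + 1))
    rwa [show (-1) ^ (N + 1) * ((N + 1).factorial : 𝕜) * L
        = 0 - (N + 1) * ((-1) ^ N * N.factorial * L) by push_cast [Nat.factorial_succ]; ring]

end NormedField

theorem integral_Ioi_pow_mul_eq (g : ℕ → ℝ → ℝ) (N : ℕ) (L : ℝ)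
    (hcont : ∀ m ≤ N, ContinuousWithinAt (g m) (Set.Ici 0) 0)
    (hderiv : ∀ m ≤ N, ∀ x > 0, HasDerivAt (g m) (g (m + 1) x) x)
    (hlim : Tendsto (g 0) atTop (𝓝 L))
    (hdecay : ∀ m, 1 ≤ m → m ≤ N → Tendsto (fun y => y ^ m * g m y) atTop (𝓝 0))
    (hint : IntegrableOn (fun x => x ^ N * g (N + 1) x) (Set.Ioi 0)) :
    ∫ x in Set.Ioi 0, x ^ N * g (N + 1) x = (-1) ^ N * (L - g 0 0) * N.factorial := by
  rw [integral_Ioi_of_hasDerivAt_of_tendsto (continuousWithinAt_powMulPrimitive g N hcont)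
    (fun x hx => hasDerivAt_powMulPrimitive g N fun m hm => hderiv m hm x hx) hint
    (tendsto_powMulPrimitive g hlim N hdecay), powMulPrimitive_zero_right]
  ring

theorem ContDiffOn.hasDerivAt_iteratedDerivWithin {𝕜 F : Type*}
    [NontriviallyNormedField 𝕜] [NormedAddCommGroup F] [NormedSpace 𝕜 F] {f : 𝕜 → F}
    {s : Set 𝕜} {n : WithTop ℕ∞} {m : ℕ} {x : 𝕜} (hf : ContDiffOn 𝕜 n f s)
    (hs : UniqueDiffOn 𝕜 s) (hm : m < n) (hx : s ∈ 𝓝 x) :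
    HasDerivAt (iteratedDerivWithin m f s) (iteratedDerivWithin (m + 1) f s x) x := by
  rw [iteratedDerivWithin_succ]
  exact ((hf.differentiableOn_iteratedDerivWithin hm hs) x
    (mem_of_mem_nhds hx)).hasDerivWithinAt.hasDerivAt hx

/-- The paper's main integral formula (Lemma 2): if `f` is `n`-times continuously
differentiable on `[0, ∞)`, tends to `L` at `∞`, `x^k f^(k)(x) → 0` as `x → 0⁺` and
as `x → ∞` for `1 ≤ k ≤ n - 1`, and `x^(n-1) f^(n)(x)` is integrable on `(0, ∞)`, then
`∫₀^∞ x^(n-1) f^(n)(x) dx = (-1)^(n-1) (L - f 0) (n-1)!`. -/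
theorem integral_rpow_iteratedDeriv (n : ℕ) (hn : 1 ≤ n) (f : ℝ → ℝ) (L : ℝ)
    (hf : ContDiffOn ℝ n f (Set.Ici 0))
    (hlim : Tendsto f atTop (𝓝 L))
    (hzero : ∀ k : ℕ, 1 ≤ k → k ≤ n - 1 →
      Tendsto (fun x : ℝ => x ^ k * iteratedDerivWithin k f (Set.Ici 0) x) (𝓝[>] 0) (𝓝 0) ∧
      Tendsto (fun x : ℝ => x ^ k * iteratedDerivWithin k f (Set.Ici 0) x) atTop (𝓝 0))
    (hint : IntegrableOn (fun x : ℝ => x ^ (n - 1) * iteratedDerivWithin n f (Set.Ici 0) x)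
      (Set.Ioi 0)) :
    ∫ x in Set.Ioi (0 : ℝ), x ^ (n - 1) * iteratedDerivWithin n f (Set.Ici 0) x
      = (-1) ^ (n - 1) * (L - f 0) * (Nat.factorial (n - 1) : ℝ) := by
  obtain ⟨N, rfl⟩ : ∃ N, n = N + 1 := ⟨n - 1, by omega⟩
  rw [Nat.add_sub_cancel] at hint hzero ⊢
  have hN (m : ℕ) (hm : m ≤ N) : (m : WithTop ℕ∞) < (N + 1 : ℕ) := by
    exact_mod_cast m.lt_succ_of_le hm
  have hs := uniqueDiffOn_Ici (0 : ℝ)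
  have h := integral_Ioi_pow_mul_eq (fun m => iteratedDerivWithin m f (Set.Ici 0)) N L
    (fun m hm => hf.continuousOn_iteratedDerivWithin (hN m hm).le hs 0 Set.self_mem_Ici)
    (fun m hm x hx => hf.hasDerivAt_iteratedDerivWithin hs (hN m hm) (Ici_mem_nhds hx))
    (by simpa using hlim) (fun m hm hmN => (hzero m hm hmN).2) hint
  simpa using h
end

section
/- Let n ≥ 1 be an integer, let ψ : ℕ → ℝ with ψ(0) ≠ 0, and suppose the power series f(x) = ∑_{k=0}^∞ ψ(k) (−x)^k / k! converges for every real x. Assume f(x) → 0 as x → ∞, that for each integer k with 1 ≤ k ≤ n − 1 the function x^k · f^{(k)}(x) tends to 0 as x → ∞, and that x ↦ x^{n−1} ∑_{k=0}^∞ ψ(n+k)(−x)^k/k! is integrable on (0, ∞). Then ∫₀^∞ x^{n−1} ∑_{k=0}^∞ ψ(n+k) (−x)^k / k! dx = (n−1)! · ψ(0). -/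
open Filter MeasureTheory Topology
open scoped Nat ContDiff

/-!
Since the series converges everywhere, its coefficients decay faster than any geometric
sequence, so it may be differentiated termwise: the shifted series
`F m x = ∑ ψ (m + k) (-x)^k / k!` satisfy `(F m)' = -F (m + 1)`, whence `f^(n) = (-1)^n F n`.
Integrating `x^(n-1) f^(n)` over `[0, T]` by parts `n - 1` times, the boundary terms vanish at `0`
identically and at `T → ∞` by the decay hypotheses, leaving `(-1)^(n-1) (n-1)! ∫₀^T f'`, which
tends to `(-1)^n (n-1)! f(0)` with `f(0) = ψ 0`.
-/

section PowerSeries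

variable {𝕜 : Type*} [RCLike 𝕜] {a : ℕ → 𝕜}

theorem summable_nat_mul_norm_mul_pow_pred (h : ∀ x : 𝕜, Summable fun k => a k * x ^ k)
    {R : ℝ} (hR : 0 < R) : Summable fun k : ℕ => k * ‖a k‖ * R ^ (k - 1) := by
  obtain ⟨C, hC⟩ := (h ((2 * R : ℝ) : 𝕜)).tendsto_atTop_zero.norm.bddAbove_range
  have hbound : ∀ k, ‖a k‖ * (2 * R) ^ k ≤ C := fun k => by
    simpa [norm_mul, norm_pow, abs_of_pos hR] using hC (Set.mem_range_self k)
  refine .of_nonneg_of_le (fun k => by positivity) (fun k => ?_)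
    ((summable_pow_mul_geometric_of_norm_lt_one 1 (r := (1 / 2 : ℝ)) (by norm_num)).mul_left
      (C / R))
  rcases k with _ | k
  · simp
  · have := hbound (k + 1)
    rw [Nat.add_sub_cancel, pow_one]
    calc (k + 1 : ℕ) * ‖a (k + 1)‖ * R ^ k
        = (k + 1 : ℕ) * (‖a (k + 1)‖ * (2 * R) ^ (k + 1)) * (1 / 2) ^ (k + 1) / R := by
          rw [div_pow, one_pow]; field_simp; ring
      _ ≤ (k + 1 : ℕ) * C * (1 / 2) ^ (k + 1) / R := by gcongr
      _ = C / R * ((k + 1 : ℕ) * (1 / 2) ^ (k + 1)) := by ring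

theorem summable_succ_mul_pow (h : ∀ x : 𝕜, Summable fun k => a k * x ^ k) (x : 𝕜) :
    Summable fun k => (k + 1) * a (k + 1) * x ^ k := by
  refine .of_norm_bounded ((summable_nat_add_iff 1).mpr
    (summable_nat_mul_norm_mul_pow_pred h (R := ‖x‖ + 1) (by positivity))) fun k => ?_
  rw [norm_mul, norm_mul, norm_pow, Nat.add_sub_cancel, ← Nat.cast_succ, RCLike.norm_natCast]
  gcongr
  linarith

theorem hasDerivAt_tsum_mul_pow (h : ∀ x : 𝕜, Summable fun k => a k * x ^ k) (x : 𝕜) :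
    HasDerivAt (fun y => ∑' k, a k * y ^ k) (∑' k, (k + 1) * a (k + 1) * x ^ k) x := by
  obtain ⟨R, hR, hxR⟩ : ∃ R, 0 < R ∧ ‖x‖ < R := ⟨‖x‖ + 1, by positivity, by linarith⟩
  have hbound (k : ℕ) (y : 𝕜) (hy : y ∈ Metric.ball 0 R) :
      ‖a k * (k * y ^ (k - 1))‖ ≤ k * ‖a k‖ * R ^ (k - 1) := by
    rw [norm_mul, norm_mul, norm_pow, RCLike.norm_natCast, ← mul_assoc, mul_comm ‖a k‖]
    gcongr
    exact (mem_ball_zero_iff.mp hy).le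
  have hx : x ∈ Metric.ball 0 R := mem_ball_zero_iff.mpr hxR
  refine (hasDerivAt_tsum_of_isPreconnected (summable_nat_mul_norm_mul_pow_pred h hR)
    Metric.isOpen_ball (convex_ball 0 R).isPreconnected
    (fun k y _ => (hasDerivAt_pow k y).const_mul (a k)) hbound hx (h x) hx).congr_deriv ?_
  rw [tsum_eq_zero_add' (by simpa only [Nat.add_sub_cancel, Nat.cast_succ, mul_left_comm (a _),
    mul_assoc] using summable_succ_mul_pow h x)]
  simp [mul_left_comm (a _), mul_assoc]

variable {c : ℕ → 𝕜}

theorem succ_mul_div_factorial_succ (c : 𝕜) (k : ℕ) : (k + 1) * (c / (k + 1)!) = c / k ! := by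
  rw [Nat.factorial_succ, Nat.cast_mul, Nat.cast_succ]
  field_simp

theorem summable_succ_mul_pow_div_factorial (h : ∀ x : 𝕜, Summable fun k => c k * x ^ k / k !)
    (x : 𝕜) : Summable fun k => c (k + 1) * x ^ k / k ! := by
  have h' (y : 𝕜) : Summable fun k => c k / k ! * y ^ k := by
    simpa only [div_mul_eq_mul_div] using h y
  simpa only [mul_assoc, succ_mul_div_factorial_succ, div_mul_eq_mul_div]
    using summable_succ_mul_pow h' x

theorem hasDerivAt_tsum_mul_pow_div_factorial (h : ∀ x : 𝕜, Summable fun k => c k * x ^ k / k !)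
    (x : 𝕜) :
    HasDerivAt (fun y => ∑' k, c k * y ^ k / k !) (∑' k, c (k + 1) * x ^ k / k !) x := by
  have h' (y : 𝕜) : Summable fun k => c k / k ! * y ^ k := by
    simpa only [div_mul_eq_mul_div] using h y
  simpa only [mul_assoc, succ_mul_div_factorial_succ, div_mul_eq_mul_div]
    using hasDerivAt_tsum_mul_pow h' x

end PowerSeries

section IntegrationByParts

variable {f : ℝ → ℝ}

theorem integral_pow_mul_iteratedDeriv_succ_succ {j : ℕ} (hf : ContDiff ℝ (j + 2) f) (T : ℝ) :
    ∫ x in 0..T, x ^ (j + 1) * iteratedDeriv (j + 2) f x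
      = T ^ (j + 1) * iteratedDeriv (j + 1) f T
        - (j + 1) * ∫ x in 0..T, x ^ j * iteratedDeriv (j + 1) f x := by
  have hderiv (x : ℝ) : HasDerivAt (iteratedDeriv (j + 1) f) (iteratedDeriv (j + 2) f x) x := by
    have := (hf.differentiable_iteratedDeriv' (j + 1) x).hasDerivAt
    rwa [← iteratedDeriv_succ] at this
  rw [intervalIntegral.integral_mul_deriv_eq_deriv_mul (u' := fun x => (j + 1) * x ^ j)
    (fun x _ => by simpa using hasDerivAt_pow (j + 1) x) (fun x _ => hderiv x)
    ((by fun_prop : Continuous fun x : ℝ => (j + 1) * x ^ j).intervalIntegrable _ _)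
    ((hf.continuous_iteratedDeriv' (j + 2)).intervalIntegrable _ _)]
  simp only [mul_assoc, intervalIntegral.integral_const_mul]
  simp

theorem tendsto_integral_pow_mul_iteratedDeriv_succ {L : ℝ} (hlim : Tendsto f atTop (𝓝 L)) :
    ∀ {n : ℕ}, ContDiff ℝ (n + 1) f →
      (∀ k : ℕ, 1 ≤ k → k ≤ n → Tendsto (fun x => x ^ k * iteratedDeriv k f x) atTop (𝓝 0)) →
      Tendsto (fun T => ∫ x in 0..T, x ^ n * iteratedDeriv (n + 1) f x) atTop
        (𝓝 ((-1) ^ n * n ! * (L - f 0)))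
  | 0, hf, _ => by
    have hftc (T : ℝ) : ∫ x in 0..T, x ^ 0 * iteratedDeriv 1 f x = f T - f 0 := by
      simp only [pow_zero, one_mul, iteratedDeriv_one]
      exact intervalIntegral.integral_deriv_eq_sub (fun x _ => hf.differentiable (by simp) x)
        ((hf.continuous_deriv (by simp)).intervalIntegrable _ _)
    simpa using (hlim.sub_const (f 0)).congr fun T => (hftc T).symm
  | n + 1, hf, hzero => by
    have ih := tendsto_integral_pow_mul_iteratedDeriv_succ hlim (n := n)
      (hf.of_le (by norm_cast; omega)) fun k hk hkn => hzero k hk (by omega)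
    simp only [integral_pow_mul_iteratedDeriv_succ_succ hf]
    convert (hzero (n + 1) le_add_self le_rfl).sub (ih.const_mul ((n : ℝ) + 1)) using 2
    push_cast [Nat.factorial_succ]
    ring

end IntegrationByParts

noncomputable def shiftedSeries (ψ : ℕ → ℝ) (m : ℕ) (x : ℝ) : ℝ :=
  ∑' k : ℕ, ψ (m + k) * (-x) ^ k / (k ! : ℝ)

section ShiftedSeries

variable {ψ : ℕ → ℝ}

theorem shiftedSeries_apply_zero (m : ℕ) : shiftedSeries ψ m 0 = ψ m := by
  rw [shiftedSeries, tsum_eq_single 0 fun k hk => by simp [hk]]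
  simp

variable (hconv : ∀ x : ℝ, Summable fun k : ℕ => ψ k * (-x) ^ k / (k ! : ℝ))
include hconv

theorem summable_shift_mul_pow_div_factorial (m : ℕ) (y : ℝ) :
    Summable fun k => ψ (m + k) * y ^ k / k ! := by
  induction m generalizing y with
  | zero => simpa using hconv (-y)
  | succ m ih =>
    simpa only [Nat.add_right_comm _ 1, ← add_assoc] using summable_succ_mul_pow_div_factorial ih y

theorem hasDerivAt_shiftedSeries (m : ℕ) (x : ℝ) :
    HasDerivAt (shiftedSeries ψ m) (-shiftedSeries ψ (m + 1) x) x := by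
  have := (hasDerivAt_tsum_mul_pow_div_factorial
    (summable_shift_mul_pow_div_factorial hconv m) (-x)).comp x (hasDerivAt_neg x)
  simp only [Function.comp_def, mul_neg_one, ← add_assoc, ← Nat.add_right_comm _ 1] at this
  exact this

theorem iteratedDeriv_shiftedSeries (j : ℕ) :
    iteratedDeriv j (shiftedSeries ψ 0) = fun x => (-1) ^ j * shiftedSeries ψ j x := by
  induction j with
  | zero => simp
  | succ j ih =>
    ext x
    rw [iteratedDeriv_succ, ih, ((hasDerivAt_shiftedSeries hconv j x).const_mul _).deriv, pow_succ]
    ring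

theorem contDiff_shiftedSeries : ContDiff ℝ ∞ (shiftedSeries ψ 0) :=
  contDiff_of_differentiable_iteratedDeriv fun j _ => by
    rw [iteratedDeriv_shiftedSeries hconv]
    exact fun x => ((hasDerivAt_shiftedSeries hconv j x).const_mul _).differentiableAt

end ShiftedSeries

theorem ramanujan_master_nat_general (n : ℕ) (hn : 1 ≤ n) (ψ : ℕ → ℝ)
    (hconv : ∀ x : ℝ, Summable fun k : ℕ => ψ k * (-x) ^ k / (Nat.factorial k : ℝ))
    (f : ℝ → ℝ)
    (hf : ∀ x : ℝ, f x = ∑' k : ℕ, ψ k * (-x) ^ k / (Nat.factorial k : ℝ))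
    (hlim : Tendsto f atTop (𝓝 0))
    (hzero : ∀ k : ℕ, 1 ≤ k → k ≤ n - 1 →
      Tendsto (fun x : ℝ => x ^ k * iteratedDeriv k f x) atTop (𝓝 0))
    (hint : IntegrableOn
      (fun x : ℝ => x ^ (n - 1) * ∑' k : ℕ, ψ (n + k) * (-x) ^ k / (Nat.factorial k : ℝ))
      (Set.Ioi 0)) :
    ∫ x in Set.Ioi (0 : ℝ),
        x ^ (n - 1) * ∑' k : ℕ, ψ (n + k) * (-x) ^ k / (Nat.factorial k : ℝ)
      = (Nat.factorial (n - 1) : ℝ) * ψ 0 := by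
  obtain ⟨m, rfl⟩ : ∃ m, n = m + 1 := ⟨n - 1, by omega⟩
  obtain rfl : f = shiftedSeries ψ 0 := funext fun x => by simp [hf, shiftedSeries]
  rw [Nat.add_sub_cancel] at hint hzero ⊢
  have hparts := tendsto_integral_pow_mul_iteratedDeriv_succ hlim
    ((contDiff_shiftedSeries hconv).of_le (by exact_mod_cast le_top)) hzero
  simp only [iteratedDeriv_shiftedSeries hconv, shiftedSeries_apply_zero,
    mul_left_comm _ ((-1 : ℝ) ^ _), intervalIntegral.integral_const_mul] at hparts
  have hIoi := (intervalIntegral_tendsto_integral_Ioi 0 hint tendsto_id).const_mul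
    ((-1 : ℝ) ^ (m + 1))
  have hsigned := tendsto_nhds_unique hIoi hparts
  rw [pow_succ, mul_neg_one, neg_mul, zero_sub, mul_neg, neg_inj, mul_assoc] at hsigned
  exact mul_left_cancel₀ (pow_ne_zero m (by norm_num)) hsigned

/-- Ramanujan's Master Theorem for a positive integer exponent `n`:
`∫₀^∞ x^(n-1) ∑_k ψ(n+k) (-x)^k / k! dx = (n-1)! ψ(0)`. -/
theorem ramanujan_master_nat (n : ℕ) (hn : 1 ≤ n) (ψ : ℕ → ℝ) (hψ0 : ψ 0 ≠ 0)
    (hconv : ∀ x : ℝ, Summable fun k : ℕ => ψ k * (-x) ^ k / (Nat.factorial k : ℝ))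
    (f : ℝ → ℝ)
    (hf : ∀ x : ℝ, f x = ∑' k : ℕ, ψ k * (-x) ^ k / (Nat.factorial k : ℝ))
    (hlim : Tendsto f atTop (𝓝 0))
    (hzero : ∀ k : ℕ, 1 ≤ k → k ≤ n - 1 →
      Tendsto (fun x : ℝ => x ^ k * iteratedDeriv k f x) atTop (𝓝 0))
    (hint : IntegrableOn
      (fun x : ℝ => x ^ (n - 1) * ∑' k : ℕ, ψ (n + k) * (-x) ^ k / (Nat.factorial k : ℝ))
      (Set.Ioi 0)) :
    ∫ x in Set.Ioi (0 : ℝ),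
        x ^ (n - 1) * ∑' k : ℕ, ψ (n + k) * (-x) ^ k / (Nat.factorial k : ℝ)
      = (Nat.factorial (n - 1) : ℝ) * ψ 0 :=
  ramanujan_master_nat_general n hn ψ hconv f hf hlim hzero hint
end

section
/- Let n ≥ 1 be an integer. Then ∫₀^∞ x^{n−1} · (dⁿ/dxⁿ erf)(x) dx = (−1)^{n−1} · (n−1)!, where erf is the error function erf(x) = (2/√π) ∫₀^x e^{−t²} dt. -/
/-!
Since `erf' = (2/√π) g` with `g(x) = e^{-x²}`, the integral is `(2/√π) ∫₀^∞ x^k g⁽ᵏ⁾(x) dx`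
for `k = n - 1`. Every derivative of `g` is a polynomial times `g`, so `x^j g⁽ᵐ⁾` is integrable
on `(0, ∞)` and tends to `0` at infinity. Integrating by parts `k` times (the boundary terms
vanish at both ends) turns `∫₀^∞ x^k g⁽ᵏ⁾` into `(-1)^k k! ∫₀^∞ g = (-1)^k k! √π/2`.
-/

open MeasureTheory Real Set Filter Topology Polynomial
open scoped Nat ContDiff

theorem integral_Ioi_pow_succ_mul_deriv {f : ℝ → ℝ} (k : ℕ) (hf : Differentiable ℝ f)
    (hint : IntegrableOn (fun x => x ^ k * f x) (Ioi 0))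
    (hint' : IntegrableOn (fun x => x ^ (k + 1) * deriv f x) (Ioi 0))
    (hlim : Tendsto (fun x => x ^ (k + 1) * f x) atTop (𝓝 0)) :
    ∫ x in Ioi 0, x ^ (k + 1) * deriv f x = -((k + 1) * ∫ x in Ioi 0, x ^ k * f x) := by
  have hderiv : ∀ x ∈ Ici (0 : ℝ), HasDerivAt (fun x => x ^ (k + 1) * f x)
      ((k + 1) * (x ^ k * f x) + x ^ (k + 1) * deriv f x) x := fun x _ => by
    refine ((hasDerivAt_pow (k + 1) x).fun_mul (hf x).hasDerivAt).congr_deriv ?_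
    push_cast
    ring
  have h := integral_Ioi_of_hasDerivAt_of_tendsto' hderiv ((hint.const_mul _).add hint') hlim
  rw [integral_add (hint.const_mul _) hint', integral_const_mul, zero_pow k.succ_ne_zero,
    zero_mul, sub_zero] at h
  linarith

theorem integral_Ioi_pow_mul_iteratedDeriv {f : ℝ → ℝ} (hf : ContDiff ℝ ∞ f)
    (hint : ∀ j m : ℕ, IntegrableOn (fun x => x ^ j * iteratedDeriv m f x) (Ioi 0))
    (hlim : ∀ j m : ℕ, Tendsto (fun x => x ^ j * iteratedDeriv m f x) atTop (𝓝 0)) (k : ℕ) :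
    ∫ x in Ioi 0, x ^ k * iteratedDeriv k f x = (-1) ^ k * k ! * ∫ x in Ioi 0, f x := by
  induction k with
  | zero => simp
  | succ k ih =>
    have hstep := integral_Ioi_pow_succ_mul_deriv k
      (hf.differentiable_iteratedDeriv k (mod_cast ENat.natCast_lt_top k)) (hint k k)
      (by simpa only [iteratedDeriv_succ] using hint (k + 1) (k + 1)) (hlim (k + 1) k)
    rw [iteratedDeriv_succ, hstep, ih, Nat.factorial_succ]
    push_cast
    ring

theorem hasDerivAt_eval_mul_exp_neg_sq (p : ℝ[X]) (x : ℝ) :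
    HasDerivAt (fun x => p.eval x * exp (-x ^ 2))
      ((derivative p - C 2 * X * p).eval x * exp (-x ^ 2)) x := by
  have hexp : HasDerivAt (fun y => exp (-y ^ 2)) (exp (-x ^ 2) * -(2 * x)) x := by
    simpa using ((hasDerivAt_pow 2 x).neg).exp
  refine ((p.hasDerivAt x).fun_mul hexp).congr_deriv ?_
  simp only [eval_sub, eval_mul, eval_C, eval_X]
  ring

theorem exists_iteratedDeriv_exp_neg_sq_eq (k : ℕ) :
    ∃ p : ℝ[X], iteratedDeriv k (fun x => exp (-x ^ 2)) = fun x => p.eval x * exp (-x ^ 2) := by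
  induction k with
  | zero => exact ⟨1, by simp⟩
  | succ k ih =>
    obtain ⟨p, hp⟩ := ih
    exact ⟨_, by rw [iteratedDeriv_succ, hp]; exact funext fun x =>
      (hasDerivAt_eval_mul_exp_neg_sq p x).deriv⟩

theorem integrable_eval_mul_exp_neg_sq (p : ℝ[X]) :
    Integrable fun x => p.eval x * exp (-x ^ 2) := by
  induction p using Polynomial.induction_on' with
  | add p q hp hq => simpa only [eval_add, add_mul] using hp.fun_add hq
  | monomial n a =>
    have h := (integrable_rpow_mul_exp_neg_mul_sq one_pos
      (lt_of_lt_of_le neg_one_lt_zero (Nat.cast_nonneg n))).const_mul a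
    simpa only [eval_monomial, rpow_natCast, neg_mul, one_mul, mul_assoc] using h

theorem tendsto_eval_mul_exp_neg_sq_atTop (p : ℝ[X]) :
    Tendsto (fun x => p.eval x * exp (-x ^ 2)) atTop (𝓝 0) := by
  induction p using Polynomial.induction_on' with
  | add p q hp hq => simpa only [eval_add, add_mul, add_zero] using hp.add hq
  | monomial n a =>
    have hexp : Tendsto (fun x : ℝ => exp (-(1 / 2) * x)) atTop (𝓝 0) :=
      tendsto_exp_atBot.comp (tendsto_id.const_mul_atTop_of_neg (by norm_num))
    have hlittle := rpow_mul_exp_neg_mul_sq_isLittleO_exp_neg one_pos (n : ℝ)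
    have h := (hlittle.tendsto_zero_of_tendsto hexp).const_mul a
    simpa only [eval_monomial, rpow_natCast, neg_mul, one_mul, mul_assoc, mul_zero] using h

theorem integral_Ioi_pow_mul_iteratedDeriv_exp_neg_sq (k : ℕ) :
    ∫ x in Ioi 0, x ^ k * iteratedDeriv k (fun x => exp (-x ^ 2)) x
      = (-1) ^ k * k ! * (√π / 2) := by
  have hpoly (j m : ℕ) : ∃ q : ℝ[X],
      (fun x => x ^ j * iteratedDeriv m (fun x => exp (-x ^ 2)) x)
        = fun x => q.eval x * exp (-x ^ 2) := by
    obtain ⟨p, hp⟩ := exists_iteratedDeriv_exp_neg_sq_eq m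
    exact ⟨X ^ j * p, by simp only [hp, eval_mul, eval_pow, eval_X, mul_assoc]⟩
  rw [integral_Ioi_pow_mul_iteratedDeriv (by fun_prop)
    (fun j m => (hpoly j m).elim fun q hq =>
      hq ▸ (integrable_eval_mul_exp_neg_sq q).integrableOn)
    (fun j m => (hpoly j m).elim fun q hq => hq ▸ tendsto_eval_mul_exp_neg_sq_atTop q)]
  simpa using congrArg ((-1) ^ k * (k ! : ℝ) * ·) (integral_gaussian_Ioi 1)

theorem iteratedDeriv_succ_of_eq_const_mul_integral {F g : ℝ → ℝ} {c : ℝ} (hg : Continuous g)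
    (hF : ∀ x, F x = c * ∫ t in (0 : ℝ)..x, g t) (m : ℕ) :
    iteratedDeriv (m + 1) F = fun x => c * iteratedDeriv m g x := by
  have hderiv : deriv F = fun x => c * g x := by
    rw [funext hF]
    exact funext fun x => by rw [deriv_const_mul_field, hg.deriv_integral]
  funext x
  rw [iteratedDeriv_succ', hderiv, iteratedDeriv_const_mul_field]

/-- For `n ≥ 1`, `∫₀^∞ x^(n-1) erf^(n)(x) dx = (-1)^(n-1) (n-1)!`, where
`erf x = (2/√π) ∫₀^x e^(-t²) dt` is the error function. -/
theorem integral_rpow_iteratedDeriv_erf (n : ℕ) (hn : 1 ≤ n) (erf : ℝ → ℝ)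
    (herf : ∀ x : ℝ, erf x = (2 / Real.sqrt π) * ∫ t in (0 : ℝ)..x, Real.exp (-t ^ 2)) :
    ∫ x in Set.Ioi (0 : ℝ), x ^ (n - 1) * iteratedDeriv n erf x
      = (-1) ^ (n - 1) * (Nat.factorial (n - 1) : ℝ) := by
  obtain ⟨k, rfl⟩ := Nat.exists_eq_add_of_le' hn
  rw [iteratedDeriv_succ_of_eq_const_mul_integral (by fun_prop) herf, Nat.add_sub_cancel]
  simp_rw [mul_left_comm _ (2 / √π)]
  rw [integral_const_mul, integral_Ioi_pow_mul_iteratedDeriv_exp_neg_sq]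
  have hπ : √π ≠ 0 := (sqrt_pos.mpr pi_pos).ne'
  field_simp
end

section
/- Let n ≥ 1 be an integer and define the n-th Laguerre polynomial by the Rodrigues formula L_n(x) = (e^x / n!) · (dⁿ/dxⁿ)(t ↦ tⁿ e^{−t})(x). Then ∫₀^∞ x^{n−1} · L_n(x) · e^{−x} dx = 0. -/
/-!
Write `T p = p' - p`, so that `dᵏ/dxᵏ (p(x) e^{-x}) = (Tᵏ p)(x) e^{-x}` and, by the fundamental
theorem of calculus, `∫₀^∞ (T p)(x) e^{-x} dx = -p(0)`. Applied to `X^{k+1} q`, together with the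
product rule `T (X^{k+1} q) = (k+1) X^k q + X^{k+1} T q`, this is an integration by parts:
`∫₀^∞ x^{k+1} (T^{k+2} p)(x) e^{-x} dx = -(k+1) ∫₀^∞ x^k (T^{k+1} p)(x) e^{-x} dx`.
Descending to `k = 0` leaves `-p(0)`, which vanishes for `p = X^n` with `n ≥ 1`.
-/

open MeasureTheory Polynomial Filter Topology Real Set Asymptotics

namespace Polynomial

theorem hasDerivAt_eval_mul_exp_neg (p : ℝ[X]) (x : ℝ) :
    HasDerivAt (fun x => p.eval x * exp (-x)) ((derivative p - p).eval x * exp (-x)) x := by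
  refine ((p.hasDerivAt x).mul (hasDerivAt_neg x).exp).congr_deriv ?_
  rw [eval_sub]
  ring

theorem iteratedDeriv_eval_mul_exp_neg (p : ℝ[X]) (k : ℕ) :
    iteratedDeriv k (fun x => p.eval x * exp (-x)) =
      fun x => ((fun q => derivative q - q)^[k] p).eval x * exp (-x) := by
  induction k with
  | zero => rfl
  | succ k ih =>
    ext x
    rw [iteratedDeriv_succ, ih, Function.iterate_succ_apply',
      (hasDerivAt_eval_mul_exp_neg _ x).deriv]

theorem tendsto_eval_mul_exp_neg_atTop (p : ℝ[X]) :
    Tendsto (fun x => p.eval x * exp (-x)) atTop (𝓝 0) := by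
  simpa only [div_eq_mul_inv, exp_neg] using p.tendsto_div_exp_atTop

theorem integrableOn_eval_mul_exp_neg (p : ℝ[X]) (a : ℝ) :
    IntegrableOn (fun x => p.eval x * exp (-x)) (Ioi a) := by
  have hp : (fun x => p.eval x) =O[atTop] fun x => exp (2⁻¹ * x) :=
    (isBigO_atTop_of_degree_le p (X ^ p.natDegree) (by simp [degree_le_natDegree])).trans
      (by simpa using (isLittleO_pow_exp_pos_mul_atTop p.natDegree (by norm_num)).isBigO)
  refine integrable_of_isBigO_exp_neg (b := 2⁻¹) (by norm_num) (by fun_prop) ?_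
  refine (hp.mul (isBigO_refl (fun x => exp (-x)) atTop)).congr_right fun x => ?_
  rw [← exp_add]
  ring_nf

theorem integral_Ioi_derivative_sub_mul_exp_neg (p : ℝ[X]) (a : ℝ) :
    ∫ x in Ioi a, (derivative p - p).eval x * exp (-x) = -(p.eval a * exp (-a)) := by
  rw [integral_Ioi_of_hasDerivAt_of_tendsto' (fun x _ => hasDerivAt_eval_mul_exp_neg p x)
    (integrableOn_eval_mul_exp_neg _ a) (tendsto_eval_mul_exp_neg_atTop p), zero_sub]

theorem derivative_sub_self_X_pow_succ_mul (k : ℕ) (q : ℝ[X]) :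
    derivative (X ^ (k + 1) * q) - X ^ (k + 1) * q =
      C ((k + 1 : ℕ) : ℝ) * (X ^ k * q) + X ^ (k + 1) * (derivative q - q) := by
  rw [derivative_mul, derivative_X_pow]
  push_cast
  ring

theorem integral_Ioi_zero_X_pow_mul_iterate_mul_exp_neg {p : ℝ[X]} (hp : p.eval 0 = 0) (k : ℕ) :
    ∫ x in Ioi 0, (X ^ k * (fun q => derivative q - q)^[k + 1] p).eval x * exp (-x) = 0 := by
  induction k with
  | zero =>
    simpa [hp] using integral_Ioi_derivative_sub_mul_exp_neg p 0
  | succ k ih =>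
    set q := (fun q => derivative q - q)^[k + 1] p
    have h := integral_Ioi_derivative_sub_mul_exp_neg (X ^ (k + 1) * q) 0
    simp only [derivative_sub_self_X_pow_succ_mul, eval_add, add_mul, eval_C_mul, mul_assoc] at h
    rw [integral_add ((integrableOn_eval_mul_exp_neg _ 0).const_mul _)
      (integrableOn_eval_mul_exp_neg _ 0), integral_const_mul, ih] at h
    simpa [q, Function.iterate_succ_apply'] using h

end Polynomial

/-- For `n ≥ 1`, `∫₀^∞ x^(n-1) L_n(x) e^(-x) dx = 0`, where `L_n` is the `n`-th Laguerre
polynomial, given by the Rodrigues formula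
`L_n(x) = (e^x / n!) (d^n/dx^n)(t ↦ t^n e^(-t))(x)`. -/
theorem integral_laguerre (n : ℕ) (hn : 1 ≤ n) (L : ℝ → ℝ)
    (hL : ∀ x : ℝ, L x = Real.exp x / (Nat.factorial n : ℝ)
      * iteratedDeriv n (fun t : ℝ => t ^ n * Real.exp (-t)) x) :
    ∫ x in Set.Ioi (0 : ℝ), x ^ (n - 1) * L x * Real.exp (-x) = 0 := by
  obtain ⟨m, rfl⟩ := Nat.exists_eq_add_one.mpr hn
  have hmonomial : (fun t : ℝ => t ^ (m + 1) * exp (-t)) =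
      fun t => (X ^ (m + 1) : ℝ[X]).eval t * exp (-t) := by
    simp only [eval_pow, eval_X]
  have hintegrand (x : ℝ) : x ^ (m + 1 - 1) * L x * exp (-x) =
      ((m + 1).factorial : ℝ)⁻¹ *
        ((X ^ m * (fun q => derivative q - q)^[m + 1] (X ^ (m + 1))).eval x * exp (-x)) := by
    rw [hL, hmonomial, iteratedDeriv_eval_mul_exp_neg, eval_mul, eval_pow, eval_X,
      Nat.add_sub_cancel]
    simp only [exp_neg]
    field_simp
  simp_rw [hintegrand, integral_const_mul,
    integral_Ioi_zero_X_pow_mul_iterate_mul_exp_neg (p := X ^ (m + 1)) (by simp), mul_zero]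
end

section
/- Let n ≥ 0 be an integer. For every real x, the n-th derivative of the function t ↦ tⁿ e^{−t} at x equals n! · e^{−x} · ∑_{k=0}^{n} (−1)^k · C(n,k) · x^k / k!, where C(n,k) is the binomial coefficient. -/
/-!
By the Leibniz rule, `(tⁿ e^{-t})⁽ⁿ⁾ = ∑ᵢ C(n,i) (tⁿ)⁽ⁱ⁾ (e^{-t})⁽ⁿ⁻ⁱ⁾`, where
`(tⁿ)⁽ⁱ⁾ = n!/(n-i)! · t^{n-i}` and `(e^{-t})⁽ⁿ⁻ⁱ⁾ = (-1)^{n-i} e^{-t}`; reindexing by `k = n - i`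
gives the Laguerre sum.
-/

open Finset Real Nat

theorem iteratedDeriv_exp_neg (n : ℕ) (x : ℝ) :
    iteratedDeriv n (fun t => exp (-t)) x = (-1) ^ n * exp (-x) := by
  simpa using congrFun (iteratedDeriv_exp_const_mul n (-1)) x

theorem Nat.cast_descFactorial_sub_eq_factorial_div {K : Type*} [Field K] [CharZero K] {n k : ℕ}
    (h : k ≤ n) : (n.descFactorial (n - k) : K) = n ! / k ! := by
  rw [eq_div_iff (by exact_mod_cast k.factorial_ne_zero), mul_comm]
  have key := Nat.factorial_mul_descFactorial (Nat.sub_le n k)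
  rw [Nat.sub_sub_self h] at key
  exact_mod_cast key

/-- Rodrigues formula for the Laguerre polynomials: for `n ≥ 0` and every real `x`,
`(d^n/dx^n)(t ↦ t^n e^(-t))(x) = n! e^(-x) ∑_{k=0}^n (-1)^k C(n,k) x^k / k!`. -/
theorem iteratedDeriv_laguerre_rodrigues (n : ℕ) (x : ℝ) :
    iteratedDeriv n (fun t : ℝ => t ^ n * Real.exp (-t)) x
      = (Nat.factorial n : ℝ) * Real.exp (-x)
        * ∑ k ∈ Finset.range (n + 1),
            (-1) ^ k * (Nat.choose n k : ℝ) * x ^ k / (Nat.factorial k : ℝ) := by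
  rw [iteratedDeriv_fun_mul (by fun_prop) (by fun_prop), ← sum_range_reflect, mul_sum]
  refine sum_congr rfl fun k hk => ?_
  have hkn : k ≤ n := Nat.lt_succ_iff.mp (mem_range.mp hk)
  rw [iteratedDeriv_pow, iteratedDeriv_exp_neg, add_tsub_cancel_right, Nat.sub_sub_self hkn,
    Nat.choose_symm hkn, Nat.cast_descFactorial_sub_eq_factorial_div hkn]
  ring
end
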